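/- Let $H$ be a Hopf algebra over a field $k$ with antipode $S$, let $D$ be an $H$-module algebra, $U$ a right $H$-comodule, and $V$ a right $D$-module. Equip $U \otimes_k V$ with the twisted right $D$-module structure $(u \otimes v)\cdot d = \sum u_{(0)} \otimes v\,(S(u_{(1)})d)$. Then the annihilator in $D$ of the twisted module $H \otimes_k V$ (where $H$ is a comodule over itself via comultiplication) equals the largest $S(H)$-stable ideal of $D$ contained in the annihilator of $V$, namely $\{d \in D \mid S(H)d \subseteq \operatorname{Ann}_D V\}$. -/

import Mathlib

open TensorProduct MulOpposite

/-- The `k`-linear map `h ↦ h • a` associated to a linear action of `H` on `A`. -/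
def actL (k H A : Type*) [CommSemiring k] [Semiring H] [Module k H]
    [AddCommMonoid A] [Module k A] [Module H A] [IsScalarTower k H A] (a : A) :
    H →ₗ[k] A where
  toFun h := h • a
  map_add' h h' := add_smul h h' a
  map_smul' c h := by simp [smul_assoc]

variable (k H D V : Type*) [Field k] [Ring H] [HopfAlgebra k H]
  [Ring D] [Algebra k D] [Module H D] [IsScalarTower k H D]
  [AddCommGroup V] [Module k V] [Module Dᵐᵒᵖ V]
  [IsScalarTower k Dᵐᵒᵖ V] [SMulCommClass Dᵐᵒᵖ k V]

/-- The bilinear map `(h, v) ↦ v · (S(h) d)` underlying the twisted action. -/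
noncomputable def actTwist (d : D) : H →ₗ[k] V →ₗ[k] V :=
  LinearMap.mk₂ k (fun h v => op ((HopfAlgebra.antipode (R := k) h) • d) • v)
    (fun h h' v => by simp [map_add, add_smul, op_add])
    (fun c h v => by simp [map_smul, smul_assoc, op_smul])
    (fun h v v' => by simp [smul_add])
    (fun c h v => smul_comm _ c v)

/-- The twisted action of `d ∈ D` on `H ⊗ V`:
`(u ⊗ v) · d = ∑ u₍₁₎ ⊗ v · (S(u₍₂₎) d)`, where `H` is a comodule over itself via the
comultiplication. -/
noncomputable def twistedAction (d : D) : H ⊗[k] V →ₗ[k] H ⊗[k] V :=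
  LinearMap.lTensor H (TensorProduct.lift (actTwist k H D V d)) ∘ₗ
    (TensorProduct.assoc k H H V).toLinearMap ∘ₗ
    LinearMap.rTensor V (Coalgebra.comul (R := k))

/-! Both sides say that the pairing `h ⊗ v ↦ v · (S(h) d)` vanishes. The twisted action
is this pairing applied after `Δ ⊗ id`, and contracting its `H`-factor with the counit
undoes `Δ` because `(ε ⊗ id) ∘ Δ = id`. -/

theorem lid_rTensor_lTensor_assoc_tmul {R C M N : Type*} [CommSemiring R]
    [AddCommMonoid C] [Module R C] [AddCommMonoid M] [Module R M] [AddCommMonoid N] [Module R N]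
    (φ : C →ₗ[R] R) (G : C ⊗[R] M →ₗ[R] N) (y : C ⊗[R] C) (m : M) :
    TensorProduct.lid R N (LinearMap.rTensor N φ
        (LinearMap.lTensor C G (TensorProduct.assoc R C C M (y ⊗ₜ m)))) =
      G (TensorProduct.lid R C (LinearMap.rTensor C φ y) ⊗ₜ m) := by
  induction y using TensorProduct.induction_on with
  | zero => simp
  | tmul a b => simp [← TensorProduct.smul_tmul']
  | add y z hy hz => simp_all [TensorProduct.add_tmul]

section

variable {k H D V}

theorem lift_actTwist_tmul (d : D) (h : H) (v : V) :
    lift (actTwist k H D V d) (h ⊗ₜ v) = op (HopfAlgebra.antipode k h • d) • v :=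
  rfl

theorem lift_actTwist_eq_zero_iff (d : D) :
    lift (actTwist k H D V d) = 0 ↔
      ∀ (h : H) (v : V), op (HopfAlgebra.antipode k h • d) • v = 0 := by
  refine ⟨fun hz h v => ?_, fun hS => TensorProduct.ext' hS⟩
  rw [← lift_actTwist_tmul, hz, LinearMap.zero_apply]

theorem lid_rTensor_counit_twistedAction (d : D) (x : H ⊗[k] V) :
    TensorProduct.lid k V (LinearMap.rTensor V Coalgebra.counit (twistedAction k H D V d x)) =
      lift (actTwist k H D V d) x := by
  induction x using TensorProduct.induction_on with
  | zero => simp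
  | tmul h v =>
    simpa [twistedAction, Coalgebra.rTensor_counit_comul] using
      lid_rTensor_lTensor_assoc_tmul (Coalgebra.counit (R := k)) (lift (actTwist k H D V d))
        (Coalgebra.comul h) v
  | add x y hx hy => simp_all

end

theorem annihilator_twisted_module :
    ∀ d : D, (∀ x : H ⊗[k] V, twistedAction k H D V d x = 0) ↔
      ∀ (h : H) (v : V), op ((HopfAlgebra.antipode (R := k) h) • d) • v = 0 := by
  intro d
  rw [← lift_actTwist_eq_zero_iff]
  constructor
  · intro hz
    refine LinearMap.ext fun x => ?_
    rw [← lid_rTensor_counit_twistedAction, hz, map_zero, map_zero, LinearMap.zero_apply]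
  · intro hlift x
    simp [twistedAction, hlift]
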